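/- With notation as above, the subspace k̄ = h ⊕ m₀ is a Lie subalgebra of so(n+1), and it is isomorphic as a Lie algebra to so(n). -/
import Mathlib


open Matrix

/-- The element `ν₀ ∈ so(n+1)` with `(ν₀)_{n,n+1} = 1 = −(ν₀)_{n+1,n}` (1-indexed). -/
def nu0 (n : ℕ) : Matrix (Fin (n + 1)) (Fin (n + 1)) ℝ :=
  Matrix.of fun i j =>
    if i.val = n - 1 ∧ j.val = n then (1 : ℝ)
    else if i.val = n ∧ j.val = n - 1 then (-1 : ℝ) else 0

/-- The inner product `⟨η, ζ⟩ = −(1/2) tr (η ζ)` on `so(n+1)`. -/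
noncomputable def ip {n : ℕ} (η ζ : Matrix (Fin (n + 1)) (Fin (n + 1)) ℝ) : ℝ :=
  -(1 / 2 : ℝ) * (η * ζ).trace

/-- Membership in `k ≅ so(n)`: skew-symmetric with vanishing last row and column. -/
def InK (n : ℕ) (η : Matrix (Fin (n + 1)) (Fin (n + 1)) ℝ) : Prop :=
  ηᵀ = -η ∧ ∀ i j : Fin (n + 1), (i.val = n ∨ j.val = n) → η i j = 0

/-- Membership in `h`, the centralizer of `ν₀` in `k`. -/
def InH (n : ℕ) (η : Matrix (Fin (n + 1)) (Fin (n + 1)) ℝ) : Prop :=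
  InK n η ∧ η * nu0 n = nu0 n * η

/-- Membership in `n = k ∩ p = k ∩ h^⊥`. -/
def InN (n : ℕ) (η : Matrix (Fin (n + 1)) (Fin (n + 1)) ℝ) : Prop :=
  InK n η ∧ ∀ ζ, InH n ζ → ip η ζ = 0

/-- Membership in `m = k^⊥ ∩ so(n+1)`: skew with nonzero entries only in the last
row and column. -/
def InM (n : ℕ) (ξ : Matrix (Fin (n + 1)) (Fin (n + 1)) ℝ) : Prop :=
  ξᵀ = -ξ ∧ ∀ i j : Fin (n + 1), i.val < n → j.val < n → ξ i j = 0

/-- Membership in `m₀ = m ∩ (ℝν₀)^⊥`. -/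
def InM0 (n : ℕ) (ξ : Matrix (Fin (n + 1)) (Fin (n + 1)) ℝ) : Prop :=
  InM n ξ ∧ ip ξ (nu0 n) = 0


/-- Membership in `k̄ = h ⊕ m₀`. -/
def InKbar (n : ℕ) (ξ : Matrix (Fin (n + 1)) (Fin (n + 1)) ℝ) : Prop :=
  ∃ a b, InH n a ∧ InM0 n b ∧ ξ = a + b

section Aux
variable {n : ℕ}

lemma sum_pair_support {m : ℕ} (p q : Fin m) (hpq : p ≠ q) (f : Fin m → ℝ)
    (h : ∀ k, k ≠ p → k ≠ q → f k = 0) : ∑ k, f k = f p + f q := by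
  rw [← Finset.sum_subset (Finset.subset_univ {p, q})
    (fun x _ hx => h x (fun h1 => hx (by simp [h1])) (fun h2 => hx (by simp [h2])))]
  rw [Finset.sum_insert (by simp [hpq]), Finset.sum_singleton]

lemma mul_nu0_apply (hn : 1 ≤ n) (η : Matrix (Fin (n + 1)) (Fin (n + 1)) ℝ)
    (i j : Fin (n + 1)) :
    (η * nu0 n) i j =
      (if j.val = n then η i ⟨n - 1, by omega⟩ else 0) +
      (if j.val = n - 1 then -η i ⟨n, by omega⟩ else 0) := by
  rw [mul_apply]
  rw [sum_pair_support ⟨n - 1, by omega⟩ ⟨n, by omega⟩ (by simp [Fin.ext_iff]; omega)]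
  · simp only [nu0, Matrix.of_apply]
    have h1 : ¬ (n = n - 1) := by omega
    have h1' : ¬ (n - 1 = n) := by omega
    by_cases hj : j.val = n <;> by_cases hj' : j.val = n - 1 <;>
      simp [hj, hj', h1, h1']
  · intro k hk1 hk2
    have h1 : ¬ (k.val = n - 1) := by
      intro h; exact hk1 (Fin.ext h)
    have h2 : ¬ (k.val = n) := by
      intro h; exact hk2 (Fin.ext h)
    simp [nu0, h1, h2]

lemma nu0_mul_apply (hn : 1 ≤ n) (η : Matrix (Fin (n + 1)) (Fin (n + 1)) ℝ)
    (i j : Fin (n + 1)) :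
    (nu0 n * η) i j =
      (if i.val = n - 1 then η ⟨n, by omega⟩ j else 0) +
      (if i.val = n then -η ⟨n - 1, by omega⟩ j else 0) := by
  rw [mul_apply]
  rw [sum_pair_support ⟨n - 1, by omega⟩ ⟨n, by omega⟩ (by simp [Fin.ext_iff]; omega)]
  · simp only [nu0, Matrix.of_apply]
    have h1 : ¬ (n = n - 1) := by omega
    have h1' : ¬ (n - 1 = n) := by omega
    by_cases hi : i.val = n - 1 <;> by_cases hi' : i.val = n <;>
      simp [hi, hi', h1, h1']
  · intro k hk1 hk2
    have h1 : ¬ (k.val = n - 1) := fun h => hk1 (Fin.ext h)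
    have h2 : ¬ (k.val = n) := fun h => hk2 (Fin.ext h)
    simp [nu0, h1, h2]

lemma trace_mul_nu0 (hn : 1 ≤ n) (η : Matrix (Fin (n + 1)) (Fin (n + 1)) ℝ) :
    (η * nu0 n).trace = η ⟨n, by omega⟩ ⟨n - 1, by omega⟩ - η ⟨n - 1, by omega⟩ ⟨n, by omega⟩ := by
  rw [Matrix.trace, ]
  simp only [Matrix.diag]
  rw [sum_pair_support ⟨n - 1, by omega⟩ ⟨n, by omega⟩ (by simp [Fin.ext_iff]; omega)]
  · rw [mul_nu0_apply hn, mul_nu0_apply hn]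
    have h1 : ¬ (n - 1 = n) := by omega
    have h1' : ¬ (n = n - 1) := by omega
    simp [h1, h1']
    ring
  · intro k hk1 hk2
    have h1 : ¬ (k.val = n - 1) := fun h => hk1 (Fin.ext h)
    have h2 : ¬ (k.val = n) := fun h => hk2 (Fin.ext h)
    rw [mul_nu0_apply hn]
    simp [h1, h2]

lemma ip_nu0_skew (hn : 1 ≤ n) (η : Matrix (Fin (n + 1)) (Fin (n + 1)) ℝ)
    (hη : ηᵀ = -η) : ip η (nu0 n) = η ⟨n - 1, by omega⟩ ⟨n, by omega⟩ := by
  have hs : η ⟨n, by omega⟩ ⟨n - 1, by omega⟩ = -η ⟨n - 1, by omega⟩ ⟨n, by omega⟩ := by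
    have := congrFun (congrFun hη ⟨n - 1, by omega⟩) ⟨n, by omega⟩
    simpa [Matrix.transpose_apply] using this
  rw [ip, trace_mul_nu0 hn, hs]
  ring

lemma kbar_iff {n : ℕ} (hn : 1 ≤ n) (ξ : Matrix (Fin (n + 1)) (Fin (n + 1)) ℝ) :
    InKbar n ξ ↔ (ξᵀ = -ξ ∧ (∀ j, ξ ⟨n - 1, by omega⟩ j = 0) ∧
      (∀ i, ξ i ⟨n - 1, by omega⟩ = 0)) := by
  constructor
  · rintro ⟨a, b, ⟨⟨haT, haK⟩, hacomm⟩, ⟨⟨hbT, hbM⟩, hbip⟩, rfl⟩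
    -- column n-1 of a vanishes
    have hacol : ∀ i, a i ⟨n - 1, by omega⟩ = 0 := by
      intro i
      have := congrFun (congrFun hacomm i) ⟨n, by omega⟩
      rw [mul_nu0_apply hn, nu0_mul_apply hn] at this
      have h1 : ¬ (n = n - 1) := by omega
      have hc : ∀ k, a k (⟨n, by omega⟩ : Fin (n + 1)) = 0 := fun k => haK k _ (Or.inr rfl)
      simpa [h1, hc] using this
    have harow : ∀ j, a ⟨n - 1, by omega⟩ j = 0 := by
      intro j
      have := congrFun (congrFun haT j) ⟨n - 1, by omega⟩
      simp only [Matrix.transpose_apply, Matrix.neg_apply] at this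
      rw [hacol j] at this
      linarith
    -- b entry (n-1, n) vanishes
    have hbpq : b ⟨n - 1, by omega⟩ ⟨n, by omega⟩ = 0 := by
      rw [← ip_nu0_skew hn b hbT]; exact hbip
    have hbrow : ∀ j, b ⟨n - 1, by omega⟩ j = 0 := by
      intro j
      rcases Nat.lt_or_ge j.val n with hj | hj
      · exact hbM _ _ (show n - 1 < n by omega) hj
      · have : j = ⟨n, by omega⟩ := Fin.ext (show j.val = n by omega)
        rw [this]; exact hbpq
    have hbcol : ∀ i, b i ⟨n - 1, by omega⟩ = 0 := by
      intro i
      have := congrFun (congrFun hbT i) ⟨n - 1, by omega⟩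
      simp only [Matrix.transpose_apply, Matrix.neg_apply] at this
      rw [hbrow i] at this
      linarith
    refine ⟨by rw [Matrix.transpose_add, haT, hbT]; abel, fun j => ?_, fun i => ?_⟩
    · simp [Matrix.add_apply, harow j, hbrow j]
    · simp [Matrix.add_apply, hacol i, hbcol i]
  · rintro ⟨hT, hrow, hcol⟩
    have hskew : ∀ i j, ξ j i = -ξ i j := by
      intro i j
      have := congrFun (congrFun hT i) j
      simpa [Matrix.transpose_apply] using this
    set a : Matrix (Fin (n + 1)) (Fin (n + 1)) ℝ :=
      Matrix.of (fun i j => if i.val < n ∧ j.val < n then ξ i j else 0) with ha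
    refine ⟨a, ξ - a, ⟨⟨?_, ?_⟩, ?_⟩, ⟨⟨?_, ?_⟩, ?_⟩, by abel⟩
    · ext i j
      by_cases hi : i.val < n <;> by_cases hj : j.val < n <;>
        simp [ha, hi, hj, hskew i j]
    · intro i j hij
      rcases hij with h | h <;> simp [ha] <;> omega
    · -- a * nu0 = nu0 * a (both zero)
      have hcola : ∀ i k, k.val = n - 1 ∨ k.val = n → a i k = 0 := by
        intro i k hk
        rcases hk with h | h
        · have hk2 : k = (⟨n - 1, by omega⟩ : Fin (n + 1)) := Fin.ext h
          rw [hk2]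
          simp [ha, hcol i]
        · simp [ha]; omega
      have hrowa : ∀ k j, k.val = n - 1 ∨ k.val = n → a k j = 0 := by
        intro k j hk
        rcases hk with h | h
        · have hk2 : k = (⟨n - 1, by omega⟩ : Fin (n + 1)) := Fin.ext h
          rw [hk2]
          simp [ha, hrow j]
        · simp [ha]; omega
      ext i j
      rw [mul_nu0_apply hn, nu0_mul_apply hn]
      rw [hcola i ⟨n - 1, by omega⟩ (Or.inl rfl), hcola i ⟨n, by omega⟩ (Or.inr rfl),
        hrowa ⟨n - 1, by omega⟩ j (Or.inl rfl), hrowa ⟨n, by omega⟩ j (Or.inr rfl)]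
      simp
    · rw [Matrix.transpose_sub, hT]
      ext i j
      by_cases hi : i.val < n <;> by_cases hj : j.val < n <;>
        simp [ha, hi, hj, hskew i j]
    · intro i j hi hj
      simp [ha, Matrix.sub_apply, hi, hj]
    · have hbT : (ξ - a)ᵀ = -(ξ - a) := by
        rw [Matrix.transpose_sub, hT]
        ext i j
        by_cases hi : i.val < n <;> by_cases hj : j.val < n <;>
          simp [ha, hi, hj, hskew i j]
      rw [ip_nu0_skew hn _ hbT]
      simp [ha, Matrix.sub_apply, hrow]

/-- Embed an n×n matrix into (n+1)×(n+1) with zero last row and column. -/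
def emb (n : ℕ) (A : Matrix (Fin n) (Fin n) ℝ) : Matrix (Fin (n + 1)) (Fin (n + 1)) ℝ :=
  Matrix.of fun i j => if h : i.val < n ∧ j.val < n then A ⟨i.val, h.1⟩ ⟨j.val, h.2⟩ else 0

def swp (n : ℕ) : Fin (n + 1) ≃ Fin (n + 1) :=
  Equiv.swap ⟨n - 1, by omega⟩ ⟨n, by omega⟩

lemma emb_mul {n : ℕ} (A B : Matrix (Fin n) (Fin n) ℝ) :
    emb n (A * B) = emb n A * emb n B := by
  ext i j
  rw [Matrix.mul_apply, Fin.sum_univ_castSucc]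
  have hlast : emb n A i (Fin.last n) = 0 := by
    simp [emb, Fin.last]
  rw [hlast, zero_mul, add_zero]
  by_cases hi : i.val < n <;> by_cases hj : j.val < n
  · simp only [emb, Matrix.of_apply, Fin.coe_castSucc, dif_pos (⟨hi, hj⟩ : i.val < n ∧ j.val < n)]
    rw [Matrix.mul_apply]
    refine Finset.sum_congr rfl (fun k _ => ?_)
    have hk : (k.castSucc : Fin (n+1)).val < n := k.is_lt
    rw [dif_pos ⟨hi, hk⟩, dif_pos ⟨hk, hj⟩]
  · have h0 : emb n (A * B) i j = 0 := by simp [emb, hj]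
    rw [h0]; symm
    refine Finset.sum_eq_zero fun k _ => ?_
    have hB : emb n B k.castSucc j = 0 := by simp [emb, hj]
    rw [hB, mul_zero]
  · have h0 : emb n (A * B) i j = 0 := by simp [emb, hi]
    rw [h0]; symm
    refine Finset.sum_eq_zero fun k _ => ?_
    have hA : emb n A i k.castSucc = 0 := by simp [emb, hi]
    rw [hA, zero_mul]
  · have h0 : emb n (A * B) i j = 0 := by simp [emb, hi]
    rw [h0]; symm
    refine Finset.sum_eq_zero fun k _ => ?_
    have hA : emb n A i k.castSucc = 0 := by simp [emb, hi]
    rw [hA, zero_mul]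

lemma emb_transpose {n : ℕ} (A : Matrix (Fin n) (Fin n) ℝ) :
    (emb n A)ᵀ = emb n Aᵀ := by
  ext i j
  by_cases hi : i.val < n <;> by_cases hj : j.val < n <;>
    simp [emb, hi, hj]

noncomputable def phi (n : ℕ) :
    Matrix (Fin n) (Fin n) ℝ →ₗ[ℝ] Matrix (Fin (n + 1)) (Fin (n + 1)) ℝ where
  toFun A := (emb n A).submatrix (swp n) (swp n)
  map_add' A B := by
    ext i j
    by_cases h : (swp n i).val < n ∧ (swp n j).val < n <;>
      simp [emb, h]
  map_smul' c A := by
    ext i j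
    by_cases h : (swp n i).val < n ∧ (swp n j).val < n <;>
      simp [emb, h]

lemma phi_apply {n : ℕ} (A : Matrix (Fin n) (Fin n) ℝ) (i j : Fin (n + 1)) :
    phi n A i j = emb n A (swp n i) (swp n j) := rfl

lemma phi_mul {n : ℕ} (A B : Matrix (Fin n) (Fin n) ℝ) :
    phi n (A * B) = phi n A * phi n B := by
  show (emb n (A * B)).submatrix (swp n) (swp n) = _
  rw [emb_mul]
  rw [← Matrix.submatrix_mul_equiv (emb n A) (emb n B) (swp n) (swp n) (swp n)]
  rfl

lemma phi_transpose {n : ℕ} (A : Matrix (Fin n) (Fin n) ℝ) :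
    (phi n A)ᵀ = phi n Aᵀ := by
  show ((emb n A).submatrix (swp n) (swp n))ᵀ = (emb n Aᵀ).submatrix (swp n) (swp n)
  rw [Matrix.transpose_submatrix, emb_transpose]

lemma submatrix_swp_swp {n : ℕ} (M : Matrix (Fin (n + 1)) (Fin (n + 1)) ℝ) :
    (M.submatrix (swp n) (swp n)).submatrix (swp n) (swp n) = M := by
  rw [Matrix.submatrix_submatrix]
  have : (swp n : Fin (n+1) → Fin (n+1)) ∘ (swp n) = id := by
    funext k
    simp [swp, Equiv.swap_apply_self]
  rw [this, Matrix.submatrix_id_id]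

end Aux

/-- `k̄ = h ⊕ m₀` is a Lie subalgebra of `so(n+1)`, and it is isomorphic as a Lie
algebra to `so(n)`: there is a linear map `φ` from `n × n` matrices that carries the
skew-symmetric matrices bijectively onto `k̄`, preserving the commutator bracket. -/
theorem kbar_subalgebra_iso_so_n (n : ℕ) (hn : 1 ≤ n) :
    (∀ ξ η, InKbar n ξ → InKbar n η → InKbar n (ξ * η - η * ξ)) ∧
    ∃ φ : Matrix (Fin n) (Fin n) ℝ →ₗ[ℝ] Matrix (Fin (n + 1)) (Fin (n + 1)) ℝ,
      (∀ A : Matrix (Fin n) (Fin n) ℝ, Aᵀ = -A → InKbar n (φ A)) ∧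
      (∀ ξ, InKbar n ξ → ∃ A : Matrix (Fin n) (Fin n) ℝ, Aᵀ = -A ∧ φ A = ξ) ∧
      (∀ A B : Matrix (Fin n) (Fin n) ℝ, Aᵀ = -A → Bᵀ = -B →
        φ (A * B - B * A) = φ A * φ B - φ B * φ A) ∧
      (∀ A : Matrix (Fin n) (Fin n) ℝ, Aᵀ = -A → φ A = 0 → A = 0) := by
  have hswp1 : swp n ⟨n - 1, by omega⟩ = ⟨n, by omega⟩ := Equiv.swap_apply_left _ _
  have hswp2 : swp n ⟨n, by omega⟩ = ⟨n - 1, by omega⟩ := Equiv.swap_apply_right _ _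
  constructor
  · intro ξ η hξ hη
    rw [kbar_iff hn] at hξ hη ⊢
    obtain ⟨hξT, hξr, hξc⟩ := hξ
    obtain ⟨hηT, hηr, hηc⟩ := hη
    refine ⟨?_, fun j => ?_, fun i => ?_⟩
    · rw [Matrix.transpose_sub, Matrix.transpose_mul, Matrix.transpose_mul, hξT, hηT]
      simp only [Matrix.neg_mul, Matrix.mul_neg, neg_neg, neg_sub]
    · simp [Matrix.sub_apply, Matrix.mul_apply, hξr, hηr]
    · simp [Matrix.sub_apply, Matrix.mul_apply, hξc, hηc]
  · refine ⟨phi n, fun A hA => ?_, fun ξ hξ => ?_, fun A B _ _ => ?_, fun A _ h0 => ?_⟩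
    · rw [kbar_iff hn]
      refine ⟨?_, fun j => ?_, fun i => ?_⟩
      · rw [phi_transpose, hA, map_neg]
      · rw [phi_apply, hswp1]
        simp [emb]
      · rw [phi_apply, hswp1]
        simp [emb]
    · rw [kbar_iff hn] at hξ
      obtain ⟨hT, hrow, hcol⟩ := hξ
      set M := ξ.submatrix (swp n) (swp n) with hM
      have hlast : (Fin.last n) = (⟨n, by omega⟩ : Fin (n + 1)) := rfl
      have hMrow : ∀ j, M (Fin.last n) j = 0 := by
        intro j
        show ξ (swp n (Fin.last n)) (swp n j) = 0
        rw [hlast, hswp2]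
        exact hrow _
      have hMcol : ∀ i, M i (Fin.last n) = 0 := by
        intro i
        show ξ (swp n i) (swp n (Fin.last n)) = 0
        rw [hlast, hswp2]
        exact hcol _
      have hMT : Mᵀ = -M := by
        rw [hM, Matrix.transpose_submatrix, hT, Matrix.submatrix_neg]
        rfl
      refine ⟨M.submatrix Fin.castSucc Fin.castSucc, ?_, ?_⟩
      · rw [Matrix.transpose_submatrix, hMT, Matrix.submatrix_neg]
        rfl
      · have hembM : emb n (M.submatrix Fin.castSucc Fin.castSucc) = M := by
          ext i j
          by_cases hi : i.val < n <;> by_cases hj : j.val < n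
          · simp only [emb, Matrix.of_apply, dif_pos (⟨hi, hj⟩ : i.val < n ∧ j.val < n),
              Matrix.submatrix_apply]
            rfl
          · have hj' : j = Fin.last n := Fin.ext (by have := j.isLt; simp [Fin.last]; omega)
            rw [hj']
            rw [hMcol i]
            simp [emb, Fin.last]
          · have hi' : i = Fin.last n := Fin.ext (by have := i.isLt; simp [Fin.last]; omega)
            rw [hi', hMrow j]
            simp [emb, Fin.last]
          · have hi' : i = Fin.last n := Fin.ext (by have := i.isLt; simp [Fin.last]; omega)
            rw [hi', hMrow j]
            simp [emb, Fin.last]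
        show (emb n (M.submatrix Fin.castSucc Fin.castSucc)).submatrix (swp n) (swp n) = ξ
        rw [hembM, hM, submatrix_swp_swp]
    · rw [map_sub, phi_mul, phi_mul]
    · have he : emb n A = 0 := by
        have h2 := submatrix_swp_swp (emb n A)
        rw [show (emb n A).submatrix (swp n) (swp n) = phi n A from rfl, h0] at h2
        simpa using h2.symm
      ext i j
      have := congrFun (congrFun he i.castSucc) j.castSucc
      simpa [emb] using this
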